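/- Let d ≥ 2, 0 < ε < 1/2, and 0 < η ≤ ε/2. Let x_0, …, x_d ∈ ℝ^d be the vertices of a regular simplex with side length 1, and let ρ_{*,η} = (1/((d+1)|B(0;η)|)) Σ_{i=0}^d χ_{B(x_i;η)}, the probability measure uniformly distributed on the union of the balls of radius η centered at the vertices. Let W_ε(x) = −1 if ||x|−1| ≤ ε and W_ε(x) = 0 otherwise, with energy E_ε. Then E_ε[ρ_{*,η}] = −d/(2(d+1)). -/

import Mathlib

open MeasureTheory Metric Filter Set
open scoped ENNReal NNReal Topology

noncomputable section

/-- The part of an extended-real number as an `ℝ≥0∞` value: negatives (and `⊥`)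
are sent to `0`, and `⊤` to `⊤`. -/
def EReal.toENNReal' (x : EReal) : ℝ≥0∞ := if x = ⊤ then ⊤ else ENNReal.ofReal x.toReal

/-- Integral of an `(ℝ ∪ {±∞})`-valued function: positive part minus negative part. -/
def eInt {X : Type*} [MeasurableSpace X] (μ : Measure X) (f : X → EReal) : EReal :=
  ((∫⁻ x, (f x).toENNReal' ∂μ : ℝ≥0∞) : EReal) -
    ((∫⁻ x, (-(f x)).toENNReal' ∂μ : ℝ≥0∞) : EReal)

/-- The interaction energy `E[ρ] = (1/2) ∫∫ W (x - y) dρ(y) dρ(x)`. -/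
def energy (d : ℕ) (W : EuclideanSpace ℝ (Fin d) → EReal)
    (ρ : Measure (EuclideanSpace ℝ (Fin d))) : EReal :=
  ((1/2 : ℝ) : EReal) * eInt (ρ.prod ρ) (fun p => W (p.1 - p.2))

/-- Condition (W0): locally integrable, bounded from below, lower semicontinuous, even. -/
def W0 (d : ℕ) (W : EuclideanSpace ℝ (Fin d) → EReal) : Prop :=
  (∀ K : Set (EuclideanSpace ℝ (Fin d)), IsCompact K → ∫⁻ x in K, (W x).toENNReal' < ⊤) ∧
  (∃ M : ℝ, ∀ x, (M : EReal) ≤ W x) ∧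
  LowerSemicontinuous W ∧ (∀ x, W (-x) = W x)

/-- A measure on `ℝ^d` is radially symmetric if it is invariant under every
origin-fixing rotation (linear isometry) of `ℝ^d`. -/
def RadiallySymmetric {d : ℕ} (ρ : Measure (EuclideanSpace ℝ (Fin d))) : Prop :=
  ∀ Q : EuclideanSpace ℝ (Fin d) ≃ₗᵢ[ℝ] EuclideanSpace ℝ (Fin d), Measure.map (⇑Q) ρ = ρ

/-- `μ` is a minimizer of the interaction energy with potential `W` over probability
measures on `ℝ^d`. -/
def IsMinimizer (d : ℕ) (W : EuclideanSpace ℝ (Fin d) → EReal)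
    (μ : Measure (EuclideanSpace ℝ (Fin d))) : Prop :=
  IsProbabilityMeasure μ ∧ ∀ ρ : Measure (EuclideanSpace ℝ (Fin d)),
    IsProbabilityMeasure ρ → energy d W μ ≤ energy d W ρ

/-- The prototype potential `W_ε`: equal to `-1` when `||x| - 1| ≤ ε` and `0` otherwise. -/
def Weps (d : ℕ) (ε : ℝ) (x : EuclideanSpace ℝ (Fin d)) : ℝ :=
  if |‖x‖ - 1| ≤ ε then -1 else 0

/-! Two points in balls of radius `η` around distinct vertices are at distance within `2η ≤ ε`
of `1`, so `W_ε = -1` on such pairs, while two points of the same ball are at distance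
`< 2η ≤ 1 - ε`, so `W_ε = 0`. The double integral therefore counts the `(d+1)d` ordered pairs of
distinct balls, each carrying mass `(d+1)⁻²`. -/

lemma EReal.toENNReal'_coe (r : ℝ) : (r : EReal).toENNReal' = ENNReal.ofReal r := by
  rw [EReal.toENNReal', if_neg (EReal.coe_ne_top r), EReal.toReal_coe]

lemma eInt_coe_of_nonpos {X : Type*} [MeasurableSpace X] (μ : Measure X) {f : X → ℝ}
    (hf : ∀ p, f p ≤ 0) :
    eInt μ (fun p => (f p : EReal)) = -((∫⁻ p, ENNReal.ofReal (-f p) ∂μ : ℝ≥0∞) : EReal) := by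
  simp only [eInt, EReal.toENNReal'_coe, ← EReal.coe_neg, ENNReal.ofReal_of_nonpos (hf _),
    lintegral_zero, EReal.coe_ennreal_zero, zero_sub]

lemma lintegral_prod_sum_restrict {α β ι κ : Type*} [MeasurableSpace α] [MeasurableSpace β]
    [Fintype ι] [Fintype κ] (μ : Measure α) (ν : Measure β) [SFinite μ] [SFinite ν]
    {s : ι → Set α} {t : κ → Set β} (hs : ∀ i, MeasurableSet (s i))
    (ht : ∀ j, MeasurableSet (t j)) {g : α × β → ℝ≥0∞} {K : ι → κ → ℝ≥0∞}
    (hg : ∀ i j, ∀ a ∈ s i, ∀ b ∈ t j, g (a, b) = K i j) :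
    ∫⁻ p, g p ∂((Measure.sum fun i => μ.restrict (s i)).prod
        (Measure.sum fun j => ν.restrict (t j)))
      = ∑ i, ∑ j, K i j * (μ (s i) * ν (t j)) := by
  rw [Measure.prod_sum, lintegral_sum_measure, tsum_fintype, Fintype.sum_prod_type]
  refine Finset.sum_congr rfl fun i _ => Finset.sum_congr rfl fun j _ => ?_
  rw [Measure.prod_restrict, setLIntegral_congr_fun ((hs i).prod (ht j))
    fun p hp => hg i j p.1 hp.1 p.2 hp.2, setLIntegral_const, Measure.prod_prod]

section Weps

variable {d : ℕ} {ε η : ℝ} {a b p q : EuclideanSpace ℝ (Fin d)}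

lemma Weps_nonpos (x : EuclideanSpace ℝ (Fin d)) : Weps d ε x ≤ 0 := by
  unfold Weps; split_ifs <;> norm_num

lemma Weps_sub_of_norm_sub_eq_one (hpq : ‖p - q‖ = 1) (ha : a ∈ ball p η) (hb : b ∈ ball q η)
    (hη : 2 * η ≤ ε) : Weps d ε (a - b) = -1 := by
  rw [mem_ball, dist_eq_norm] at ha hb
  have : |‖a - b‖ - ‖p - q‖| ≤ ‖a - p‖ + ‖b - q‖ :=
    calc |‖a - b‖ - ‖p - q‖| ≤ ‖(a - p) - (b - q)‖ := by
          rw [show (a - p) - (b - q) = (a - b) - (p - q) by abel]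
          exact abs_norm_sub_norm_le _ _
      _ ≤ ‖a - p‖ + ‖b - q‖ := norm_sub_le _ _
  rw [Weps, if_pos (by rw [← hpq]; linarith)]

lemma Weps_sub_of_mem_ball (ha : a ∈ ball p η) (hb : b ∈ ball p η) (hεη : ε + 2 * η ≤ 1) :
    Weps d ε (a - b) = 0 := by
  have hab : ‖a - b‖ < 2 * η := by
    calc ‖a - b‖ ≤ dist a p + dist b p := dist_triangle_right a b p
      _ < 2 * η := by rw [mem_ball] at ha hb; linarith
  rw [Weps, if_neg (by rw [abs_sub_comm, not_le]; linarith [le_abs_self (1 - ‖a - b‖)])]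

lemma ofReal_neg_Weps_sub_of_mem_ball {ι : Type*} [DecidableEq ι]
    {x : ι → EuclideanSpace ℝ (Fin d)} (hx : ∀ i j, i ≠ j → ‖x i - x j‖ = 1)
    (hη : 2 * η ≤ ε) (hεη : ε + 2 * η ≤ 1) {i j : ι} (ha : a ∈ ball (x i) η)
    (hb : b ∈ ball (x j) η) :
    ENNReal.ofReal (-Weps d ε (a - b)) = if i ≠ j then 1 else 0 := by
  split_ifs with hij
  · rw [Weps_sub_of_norm_sub_eq_one (hx i j hij) ha hb hη]; simp
  · obtain rfl := not_ne_iff.mp hij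
    rw [Weps_sub_of_mem_ball ha hb hεη]; simp

end Weps

lemma ENNReal.inv_mul_inv_mul_mul_mul_self {a b v : ℝ≥0∞} (ha0 : a ≠ 0) (hat : a ≠ ⊤)
    (hv0 : v ≠ 0) (hvt : v ≠ ⊤) :
    (a * v)⁻¹ * ((a * v)⁻¹ * (a * b * (v * v))) = b / a := by
  rw [ENNReal.mul_inv (.inl ha0) (.inl hat), div_eq_mul_inv]
  calc a⁻¹ * v⁻¹ * (a⁻¹ * v⁻¹ * (a * b * (v * v)))
      = (a⁻¹ * a) * (v⁻¹ * v) * (v⁻¹ * v) * (b * a⁻¹) := by ring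
    _ = b * a⁻¹ := by rw [ENNReal.inv_mul_cancel ha0 hat, ENNReal.inv_mul_cancel hv0 hvt]; ring

theorem energy_simplex_balls_general (d : ℕ) (ε : ℝ) (hε : ε < 1/2)
    (η : ℝ) (hη0 : 0 < η) (hη : η ≤ ε/2)
    (x : Fin (d+1) → EuclideanSpace ℝ (Fin d))
    (hx : ∀ i j, i ≠ j → ‖x i - x j‖ = 1) :
    energy d (fun y => ((Weps d ε y : ℝ) : EReal))
        (((((d : ℝ≥0∞) + 1) * volume (ball (0 : EuclideanSpace ℝ (Fin d)) η))⁻¹) •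
          ∑ i, volume.restrict (ball (x i) η))
      = ((-(d : ℝ) / (2*((d : ℝ)+1)) : ℝ) : EReal) := by
  set v := volume (ball (0 : EuclideanSpace ℝ (Fin d)) η)
  have hball : ∀ i, volume (ball (x i) η) = v := fun i =>
    Measure.addHaar_ball_center volume (x i) η
  have hsum : ∀ i : Fin (d + 1), ∑ j, (if i ≠ j then (1 : ℝ≥0∞) else 0) = d := by
    intro i
    rw [Finset.sum_boole, Finset.filter_ne, Finset.card_erase_of_mem (Finset.mem_univ _)]
    simp
  have hneg : ∫⁻ p, ENNReal.ofReal (-Weps d ε (p.1 - p.2)) ∂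
      ((((((d : ℝ≥0∞) + 1) * v)⁻¹) • ∑ i, volume.restrict (ball (x i) η)).prod
        ((((((d : ℝ≥0∞) + 1) * v)⁻¹) • ∑ i, volume.restrict (ball (x i) η))))
      = ENNReal.ofReal (d / (d + 1)) := by
    rw [← Measure.sum_fintype, Measure.prod_smul_left, Measure.prod_smul_right,
      lintegral_smul_measure, lintegral_smul_measure,
      lintegral_prod_sum_restrict volume volume (fun _ => measurableSet_ball)
        (fun _ => measurableSet_ball) fun _ _ _ ha _ hb =>
          ofReal_neg_Weps_sub_of_mem_ball hx (by linarith) (by linarith) ha hb]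
    simp only [hball, ← Finset.sum_mul, hsum, Finset.sum_const, Finset.card_univ, Fintype.card_fin,
      nsmul_eq_mul, smul_eq_mul]
    push_cast
    rw [ENNReal.inv_mul_inv_mul_mul_mul_self (by positivity) (by simp)
      (measure_ball_pos volume (0 : EuclideanSpace ℝ (Fin d)) hη0).ne' measure_ball_lt_top.ne,
      ENNReal.ofReal_div_of_pos (by positivity)]
    norm_cast
  rw [energy, eInt_coe_of_nonpos _ fun _ => Weps_nonpos _, hneg, EReal.coe_ennreal_ofReal,
    max_eq_left (by positivity), ← EReal.coe_neg, ← EReal.coe_mul]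
  congr 1
  field_simp

/-- The energy `E_ε` of the uniform measure on the union of balls of radius `η ≤ ε/2`
centered at the vertices of a unit regular simplex equals `-d/(2(d+1))`. -/
theorem energy_simplex_balls (d : ℕ) (hd : 2 ≤ d) (ε : ℝ) (hε0 : 0 < ε) (hε : ε < 1/2)
    (η : ℝ) (hη0 : 0 < η) (hη : η ≤ ε/2)
    (x : Fin (d+1) → EuclideanSpace ℝ (Fin d))
    (hx : ∀ i j, i ≠ j → ‖x i - x j‖ = 1) :
    energy d (fun y => ((Weps d ε y : ℝ) : EReal))
        (((((d : ℝ≥0∞) + 1) * volume (ball (0 : EuclideanSpace ℝ (Fin d)) η))⁻¹) •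
          ∑ i, volume.restrict (ball (x i) η))
      = ((-(d : ℝ) / (2*((d : ℝ)+1)) : ℝ) : EReal) :=
  energy_simplex_balls_general d ε hε η hη0 hη x hx
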